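/- arXiv:2307.14882 — 5 statements merged into one kernel-verified Lean document; each statement's English description precedes it below -/
import Mathlib

section
/- Let F be a field, t ∈ F with t ≠ 0, n ≥ 3 an integer, σ : Fin n → Fin n a map with σ(i) ≠ i and σ(i) ≠ i + 1 (mod n) for every i, and ε : Fin n → Bool, and let H be the associated Fox-type parity check matrix. Then the knot code C_H = {x ∈ F^n : H·x = 0} satisfies 1 ≤ dim_F C_H and 2·dim_F C_H ≤ n + 1. -/
set_option linter.unusedSectionVars false

open Finset
open scoped Fin.CommRing Fin.NatCast

section aux
variable {n : ℕ} [NeZero n]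


lemma aux_card_val_lt (m : ℕ) (hm : m ≤ n) :
    (Finset.univ.filter fun e : Fin n => e.val < m).card = m := by
  apply Finset.card_eq_of_bijective (fun k hk => (⟨k, lt_of_lt_of_le hk hm⟩ : Fin n))
  · intro a ha
    simp only [Finset.mem_filter, Finset.mem_univ, true_and] at ha
    exact ⟨a.val, ha, Fin.ext rfl⟩
  · intro k hk
    simp [hk]
  · intro i j hi hj h
    exact congrArg Fin.val h

lemma aux_countA (δ : Fin n) (hδ : δ ≠ 0) :
    (Finset.univ.filter fun e : Fin n => ¬ ((δ + e).val ≤ e.val)).card = n - δ.val := by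
  have h1 : 1 ≤ δ.val := by
    rcases Nat.eq_zero_or_pos δ.val with h | h
    · exact absurd (Fin.ext (by simp [h]) : δ = 0) hδ
    · exact h
  have hlt := δ.isLt
  have key : ∀ e : Fin n, (¬ ((δ + e).val ≤ e.val)) ↔ e.val < n - δ.val := by
    intro e
    have hv : (δ + e).val = (δ.val + e.val) % n := Fin.val_add δ e
    have he := e.isLt
    by_cases hc : e.val < n - δ.val
    · have : δ.val + e.val < n := by omega
      rw [hv, Nat.mod_eq_of_lt this]
      constructor
      · intro _; exact hc
      · intro _; omega
    · have h2 : n ≤ δ.val + e.val := by omega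
      have h3 : δ.val + e.val - n < n := by omega
      have : (δ.val + e.val) % n = δ.val + e.val - n := by
        rw [Nat.mod_eq_sub_mod h2, Nat.mod_eq_of_lt h3]
      rw [hv, this]
      constructor
      · intro hcon; exact absurd (by omega) hcon
      · intro hcon; omega
  rw [Finset.filter_congr (fun e _ => by rw [key e])]
  exact aux_card_val_lt _ (Nat.sub_le _ _)

lemma aux_filter_equiv_card {α β : Type*} [Fintype α] [Fintype β] [DecidableEq α] [DecidableEq β]
    (g : α ≃ β) (p : β → Prop) [DecidablePred p] :
    (Finset.univ.filter fun a => p (g a)).card = (Finset.univ.filter p).card := by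
  apply Finset.card_bij' (fun a _ => g a) (fun b _ => g.symm b) <;> simp

end aux

section main
variable {F : Type*} [Field F] {n : ℕ} [NeZero n]


lemma aux_row (hn : 3 ≤ n) (t : F)
    (σ : Fin n → Fin n) (hσ₁ : ∀ i, σ i ≠ i) (hσ₂ : ∀ i, σ i ≠ i + 1)
    (ε : Fin n → Bool) (H : Matrix (Fin n) (Fin n) F)
    (hH : ∀ i j, H i j =
      if j = σ i then 1 - t
      else if j = i then (if ε i then -1 else t)
      else if j = i + 1 then (if ε i then t else -1)
      else 0)
    (x : Fin n → F) (i : Fin n) :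
    H.mulVec x i = (1 - t) * x (σ i) + (if ε i then (-1 : F) else t) * x i
      + (if ε i then t else (-1 : F)) * x (i + 1) := by
  have hone : (1 : Fin n) ≠ 0 := by
    intro h
    have := congrArg Fin.val h
    rw [Fin.val_one', Fin.val_zero, Nat.mod_eq_of_lt (by omega : 1 < n)] at this
    omega
  have hii : i ≠ i + 1 := by
    intro h
    nth_rewrite 1 [← add_zero i] at h
    exact hone (add_left_cancel h).symm
  have key : ∀ j, H i j * x j =
      (if j = σ i then (1 - t) * x (σ i) else 0) +
      ((if j = i then (if ε i then (-1:F) else t) * x i else 0) +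
      (if j = i + 1 then (if ε i then t else (-1:F)) * x (i + 1) else 0)) := by
    intro j
    rw [hH]
    by_cases h1 : j = σ i
    · subst h1; simp [hσ₁ i, hσ₂ i]
    · by_cases h2 : j = i
      · subst h2; simp [h1, hii]
      · by_cases h3 : j = i + 1
        · subst h3; simp [h1, Ne.symm hii]
        · simp [h1, h2, h3]
  show (∑ j, H i j * x j) = _
  rw [Finset.sum_congr rfl fun j _ => key j, Finset.sum_add_distrib, Finset.sum_add_distrib,
    Finset.sum_ite_eq', Finset.sum_ite_eq', Finset.sum_ite_eq']
  simp [add_assoc]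



lemma aux_forceF (hn : 3 ≤ n) (t : F) (ht : t ≠ 0)
    (σ : Fin n → Fin n) (hσ₁ : ∀ i, σ i ≠ i) (hσ₂ : ∀ i, σ i ≠ i + 1)
    (ε : Fin n → Bool) (H : Matrix (Fin n) (Fin n) F)
    (hH : ∀ i j, H i j =
      if j = σ i then 1 - t
      else if j = i then (if ε i then -1 else t)
      else if j = i + 1 then (if ε i then t else -1)
      else 0)
    (c : Fin n) (x : Fin n → F) (hx : H.mulVec x = 0) (hc : x c = 0)
    (hS : ∀ i, ¬ ((σ i - c).val ≤ (i - c).val) → x (σ i) = 0) : x = 0 := by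
  have main : ∀ k : ℕ, x (c + (k : ℕ)) = 0 := by
    intro k
    induction k using Nat.strong_induction_on with
    | _ k IH =>
      match k with
      | 0 => simpa using hc
      | (k' + 1) =>
        set i : Fin n := c + (k' : ℕ) with hi
        have hxi : x i = 0 := IH k' (Nat.lt_succ_self k')
        have hic : (i - c).val = k' % n := by
          have h1 : i - c = ((k' : ℕ) : Fin n) := by rw [hi]; ring
          rw [h1, Fin.val_natCast]
        have hxσ : x (σ i) = 0 := by
          by_cases hcond : (σ i - c).val ≤ (i - c).val
          · have hlt : (σ i - c).val < k' + 1 := by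
              rw [hic] at hcond
              exact Nat.lt_succ_of_le (hcond.trans (Nat.mod_le k' n))
            have heq : σ i = c + (((σ i - c).val : ℕ) : Fin n) := by
              rw [Fin.cast_val_eq_self]; ring
            rw [heq]; exact IH _ hlt
          · exact hS i hcond
        have hrow := congrFun hx i
        rw [Pi.zero_apply, aux_row hn t σ hσ₁ hσ₂ ε H hH x i] at hrow
        have hnext : x (i + 1) = 0 := by
          cases hb : ε i
          · rw [hb] at hrow; simp [hxi, hxσ] at hrow; exact hrow
          · rw [hb] at hrow; simp [hxi, hxσ] at hrow
            rcases hrow with h | h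
            · exact absurd h ht
            · exact h
        have hcast : ((k' + 1 : ℕ) : Fin n) = ((k' : ℕ) : Fin n) + 1 := by push_cast; ring
        rw [hcast, ← add_assoc]
        exact hnext
  funext j
  have h := main ((j - c).val)
  rwa [Fin.cast_val_eq_self, show c + (j - c) = j from by ring] at h

lemma aux_forceB (hn : 3 ≤ n) (t : F) (ht : t ≠ 0)
    (σ : Fin n → Fin n) (hσ₁ : ∀ i, σ i ≠ i) (hσ₂ : ∀ i, σ i ≠ i + 1)
    (ε : Fin n → Bool) (H : Matrix (Fin n) (Fin n) F)
    (hH : ∀ i j, H i j =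
      if j = σ i then 1 - t
      else if j = i then (if ε i then -1 else t)
      else if j = i + 1 then (if ε i then t else -1)
      else 0)
    (c : Fin n) (x : Fin n → F) (hx : H.mulVec x = 0) (hc : x c = 0)
    (hS : ∀ i, ¬ ((c - σ i).val ≤ (c - (i + 1)).val) → x (σ i) = 0) : x = 0 := by
  have main : ∀ k : ℕ, x (c - (k : ℕ)) = 0 := by
    intro k
    induction k using Nat.strong_induction_on with
    | _ k IH =>
      match k with
      | 0 => simpa using hc
      | (k' + 1) =>
        set i : Fin n := c - ((k' + 1 : ℕ) : Fin n) with hi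
        have hi1 : i + 1 = c - ((k' : ℕ) : Fin n) := by rw [hi]; push_cast; ring
        have hxi1 : x (i + 1) = 0 := by rw [hi1]; exact IH k' (Nat.lt_succ_self k')
        have hci : (c - (i + 1)).val = k' % n := by
          rw [hi1, show c - (c - ((k' : ℕ) : Fin n)) = ((k' : ℕ) : Fin n) from by ring,
            Fin.val_natCast]
        have hxσ : x (σ i) = 0 := by
          by_cases hcond : (c - σ i).val ≤ (c - (i + 1)).val
          · have hlt : (c - σ i).val < k' + 1 := by
              rw [hci] at hcond
              exact Nat.lt_succ_of_le (hcond.trans (Nat.mod_le k' n))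
            have heq : σ i = c - (((c - σ i).val : ℕ) : Fin n) := by
              rw [Fin.cast_val_eq_self]; ring
            rw [heq]; exact IH _ hlt
          · exact hS i hcond
        have hrow := congrFun hx i
        rw [Pi.zero_apply, aux_row hn t σ hσ₁ hσ₂ ε H hH x i] at hrow
        have hthis : x i = 0 := by
          cases hb : ε i
          · rw [hb] at hrow; simp [hxi1, hxσ] at hrow
            rcases hrow with h | h
            · exact absurd h ht
            · exact h
          · rw [hb] at hrow; simp [hxi1, hxσ] at hrow; exact hrow
        exact hthis
  funext j
  have h := main ((c - j).val)
  rwa [Fin.cast_val_eq_self, show c - (c - j) = j from by ring] at h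



lemma aux_finrank_le (H : Matrix (Fin n) (Fin n) F) (S : Finset (Fin n))
    (hforce : ∀ x : Fin n → F, H.mulVec x = 0 → (∀ j ∈ S, x j = 0) → x = 0) :
    Module.finrank F (LinearMap.ker H.mulVecLin) ≤ S.card := by
  classical
  let φ : (LinearMap.ker H.mulVecLin) →ₗ[F] ({j // j ∈ S} → F) :=
    (LinearMap.funLeft F F (fun j : {j // j ∈ S} => (j : Fin n))).comp (Submodule.subtype _)
  have hφ : Function.Injective φ := by
    rw [← LinearMap.ker_eq_bot, LinearMap.ker_eq_bot']
    intro m hm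
    have hmem := m.2
    rw [LinearMap.mem_ker] at hmem
    have hxm : (m : Fin n → F) = 0 := by
      apply hforce _ hmem
      intro j hj
      exact congrFun hm ⟨j, hj⟩
    exact Subtype.ext hxm
  calc Module.finrank F (LinearMap.ker H.mulVecLin)
      ≤ Module.finrank F ({j // j ∈ S} → F) :=
        LinearMap.finrank_le_finrank_of_injective hφ
    _ = S.card := by rw [Module.finrank_pi]; simp


lemma aux_per_i (hn : 3 ≤ n) (σ : Fin n → Fin n) (hσ₁ : ∀ i, σ i ≠ i)
    (hσ₂ : ∀ i, σ i ≠ i + 1) (i : Fin n) :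
    (Finset.univ.filter fun c : Fin n => ¬ ((σ i - c).val ≤ (i - c).val)).card +
    (Finset.univ.filter fun c : Fin n => ¬ ((c - σ i).val ≤ (c - (i + 1)).val)).card
      = n - 1 := by
  classical
  have hδ : σ i - i ≠ 0 := sub_ne_zero.2 (hσ₁ i)
  have hγ : (i + 1) - σ i ≠ 0 := sub_ne_zero.2 (Ne.symm (hσ₂ i))
  have hA : (Finset.univ.filter fun c : Fin n => ¬ ((σ i - c).val ≤ (i - c).val)).card
      = n - (σ i - i).val := by
    have h1 : (Finset.univ.filter fun c : Fin n => ¬ ((σ i - c).val ≤ (i - c).val))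
        = (Finset.univ.filter fun c : Fin n =>
            ¬ (((σ i - i) + ((Equiv.subLeft i) c)).val ≤ ((Equiv.subLeft i) c).val)) := by
      apply Finset.filter_congr
      intro c _
      have : σ i - c = (σ i - i) + (i - c) := by ring
      simp only [Equiv.subLeft_apply, ← this]
    rw [h1,
      aux_filter_equiv_card (Equiv.subLeft i) (fun e => ¬ (((σ i - i) + e).val ≤ e.val)),
      aux_countA _ hδ]
  have hB : (Finset.univ.filter fun c : Fin n => ¬ ((c - σ i).val ≤ (c - (i + 1)).val)).card
      = n - ((i + 1) - σ i).val := by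
    have h1 : (Finset.univ.filter fun c : Fin n => ¬ ((c - σ i).val ≤ (c - (i + 1)).val))
        = (Finset.univ.filter fun c : Fin n =>
            ¬ ((((i + 1) - σ i) + ((Equiv.subRight (i + 1)) c)).val
              ≤ ((Equiv.subRight (i + 1)) c).val)) := by
      apply Finset.filter_congr
      intro c _
      have : c - σ i = ((i + 1) - σ i) + (c - (i + 1)) := by ring
      simp only [Equiv.subRight_apply, ← this]
    rw [h1,
      aux_filter_equiv_card (Equiv.subRight (i + 1))
        (fun e => ¬ ((((i + 1) - σ i) + e).val ≤ e.val)),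
      aux_countA _ hγ]
  rw [hA, hB]
  have hsum1 : (σ i - i) + ((i + 1) - σ i) = (1 : Fin n) := by ring
  have hval : ((σ i - i).val + ((i + 1) - σ i).val) % n = 1 := by
    rw [← Fin.val_add, hsum1, Fin.val_one', Nat.mod_eq_of_lt (by omega : 1 < n)]
  have ha1 : (σ i - i).val ≠ 0 := fun h => hδ (Fin.ext (by simp [h]))
  have hg1 : ((i + 1) - σ i).val ≠ 0 := fun h => hγ (Fin.ext (by simp [h]))
  have ha2 := (σ i - i).isLt
  have hg2 := ((i + 1) - σ i).isLt
  have : (σ i - i).val + ((i + 1) - σ i).val = n + 1 := by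
    rcases Nat.lt_or_ge ((σ i - i).val + ((i + 1) - σ i).val) n with h | h
    · rw [Nat.mod_eq_of_lt h] at hval; omega
    · have h2 : (σ i - i).val + ((i + 1) - σ i).val - n < n := by omega
      rw [Nat.mod_eq_sub_mod h, Nat.mod_eq_of_lt h2] at hval; omega
  omega


end main

/-- For the Fox-type parity check matrix `H` of a reduced oriented knot
diagram with `n ≥ 3` crossings (strands numbered consecutively, `σ i` the overstrand
at crossing `i`), the knot code `C_H = {x | H · x = 0}` satisfies
`1 ≤ dim C_H` and `2 · dim C_H ≤ n + 1`. -/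
theorem stmt0 (F : Type*) [Field F] (n : ℕ) [NeZero n] (hn : 3 ≤ n)
    (t : F) (ht : t ≠ 0)
    (σ : Fin n → Fin n) (hσ₁ : ∀ i, σ i ≠ i) (hσ₂ : ∀ i, σ i ≠ i + 1)
    (ε : Fin n → Bool)
    (H : Matrix (Fin n) (Fin n) F)
    (hH : ∀ i j, H i j =
      if j = σ i then 1 - t
      else if j = i then (if ε i then -1 else t)
      else if j = i + 1 then (if ε i then t else -1)
      else 0) :
    1 ≤ Module.finrank F (LinearMap.ker H.mulVecLin) ∧
      2 * Module.finrank F (LinearMap.ker H.mulVecLin) ≤ n + 1 := by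
  classical
  constructor
  · -- lower bound: the all-ones vector lies in the kernel
    have h1 : (fun _ => (1 : F)) ∈ LinearMap.ker H.mulVecLin := by
      rw [LinearMap.mem_ker]
      funext i
      rw [Matrix.mulVecLin_apply, Pi.zero_apply,
        aux_row hn t σ hσ₁ hσ₂ ε H hH (fun _ => (1 : F)) i]
      cases ε i <;> simp <;> ring
    have hne : ((⟨fun _ => (1 : F), h1⟩ : LinearMap.ker H.mulVecLin)) ≠ 0 := by
      intro hcon
      have := congrFun (congrArg Subtype.val hcon) 0
      simp at this
    have : Nontrivial (LinearMap.ker H.mulVecLin) := ⟨⟨_, 0, hne⟩⟩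
    have := Module.finrank_pos_iff (R := F) (M := LinearMap.ker H.mulVecLin) |>.mpr this
    omega
  · classical
    set cA : Fin n → ℕ := fun c =>
      (Finset.univ.filter fun i : Fin n => ¬ ((σ i - c).val ≤ (i - c).val)).card with hcA
    set cB : Fin n → ℕ := fun c =>
      (Finset.univ.filter fun i : Fin n => ¬ ((c - σ i).val ≤ (c - (i + 1)).val)).card with hcB
    have hsum : ∑ c : Fin n, (cA c + cB c) = n * (n - 1) := by
      rw [Finset.sum_add_distrib]
      have h1 : ∑ c : Fin n, cA c
          = ∑ i : Fin n, (Finset.univ.filter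
              fun c : Fin n => ¬ ((σ i - c).val ≤ (i - c).val)).card := by
        simp only [hcA, Finset.card_filter]
        exact Finset.sum_comm
      have h2 : ∑ c : Fin n, cB c
          = ∑ i : Fin n, (Finset.univ.filter
              fun c : Fin n => ¬ ((c - σ i).val ≤ (c - (i + 1)).val)).card := by
        simp only [hcB, Finset.card_filter]
        exact Finset.sum_comm
      rw [h1, h2, ← Finset.sum_add_distrib,
        Finset.sum_congr rfl fun i _ => aux_per_i hn σ hσ₁ hσ₂ i]
      simp [mul_comm]
    have hex : ∃ c : Fin n, cA c + cB c ≤ n - 1 := by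
      by_contra hcon
      push_neg at hcon
      have hge : ∀ c ∈ (Finset.univ : Finset (Fin n)), n ≤ cA c + cB c := by
        intro c _
        have := hcon c
        omega
      have : (n : ℕ) * n ≤ ∑ c : Fin n, (cA c + cB c) := by
        calc (n : ℕ) * n = ∑ _c : Fin n, n := by simp [mul_comm]
          _ ≤ _ := Finset.sum_le_sum hge
      rw [hsum] at this
      have hn0 : 0 < n := by omega
      have := Nat.le_of_mul_le_mul_left (by linarith [this] : n * n ≤ n * (n - 1)) hn0
      omega
    obtain ⟨c, hc⟩ := hex
    have hF : Module.finrank F (LinearMap.ker H.mulVecLin) ≤ 1 + cA c := by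
      have hforce : ∀ x : Fin n → F, H.mulVec x = 0 →
          (∀ j ∈ insert c ((Finset.univ.filter
            fun i : Fin n => ¬ ((σ i - c).val ≤ (i - c).val)).image σ), x j = 0) → x = 0 := by
        intro x hx hvan
        refine aux_forceF hn t ht σ hσ₁ hσ₂ ε H hH c x hx
          (hvan c (Finset.mem_insert_self _ _)) ?_
        intro i hcond
        exact hvan (σ i) (Finset.mem_insert_of_mem
          (Finset.mem_image_of_mem σ (Finset.mem_filter.2 ⟨Finset.mem_univ i, hcond⟩)))
      refine (aux_finrank_le H _ hforce).trans ?_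
      calc _ ≤ ((Finset.univ.filter
            fun i : Fin n => ¬ ((σ i - c).val ≤ (i - c).val)).image σ).card + 1 :=
          Finset.card_insert_le _ _
        _ ≤ cA c + 1 := by
            exact Nat.add_le_add_right (Finset.card_image_le) 1
        _ = 1 + cA c := by omega
    have hB : Module.finrank F (LinearMap.ker H.mulVecLin) ≤ 1 + cB c := by
      have hforce : ∀ x : Fin n → F, H.mulVec x = 0 →
          (∀ j ∈ insert c ((Finset.univ.filter
            fun i : Fin n => ¬ ((c - σ i).val ≤ (c - (i + 1)).val)).image σ), x j = 0) → x = 0 := by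
        intro x hx hvan
        refine aux_forceB hn t ht σ hσ₁ hσ₂ ε H hH c x hx
          (hvan c (Finset.mem_insert_self _ _)) ?_
        intro i hcond
        exact hvan (σ i) (Finset.mem_insert_of_mem
          (Finset.mem_image_of_mem σ (Finset.mem_filter.2 ⟨Finset.mem_univ i, hcond⟩)))
      refine (aux_finrank_le H _ hforce).trans ?_
      calc _ ≤ ((Finset.univ.filter
            fun i : Fin n => ¬ ((c - σ i).val ≤ (c - (i + 1)).val)).image σ).card + 1 :=
          Finset.card_insert_le _ _
        _ ≤ cB c + 1 := by
            exact Nat.add_le_add_right (Finset.card_image_le) 1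
        _ = 1 + cB c := by omega
    omega
end

section
/- Let F be a field and let C ⊆ F^n and D ⊆ F^m be linear codes. Then the minimum distance of the connected-sum code C # D (valued in ℕ∞) equals min( d(C'), d(D'), sInf { wt(c) + wt(d) : c ∈ C with c_n ≠ 0, d ∈ D with d_m ≠ 0 } ), where all infima are taken in ℕ∞ with sInf ∅ = ∞. -/
/-! Every nonzero word of `C # D` is `(c, 0)` with `c ∈ C'`, `(0, d)` with `d ∈ D'`, or `(c, d)`
with both last coordinates nonzero; this bounds `d(C # D)` from below. Conversely words of `C'`
and `D'` extend by zero, and any `c`, `d` with nonzero last coordinates glue to `(c, λ • d)` with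
`λ = cₙ / dₘ`, a rescaling that does not change the weight of `d`. -/

/-- The connected-sum code `C # D` of two linear codes, consisting of pairs `(c, d)`
with `c ∈ C`, `d ∈ D`, whose last coordinates agree. -/
def connSum (F : Type*) [Field F] {n m : ℕ}
    (C : Submodule F (Fin (n + 1) → F)) (D : Submodule F (Fin (m + 1) → F)) :
    Submodule F ((Fin (n + 1) → F) × (Fin (m + 1) → F)) where
  carrier := {x | x.1 ∈ C ∧ x.2 ∈ D ∧ x.1 (Fin.last n) = x.2 (Fin.last m)}
  add_mem' := by
    rintro a b ⟨ha₁, ha₂, ha₃⟩ ⟨hb₁, hb₂, hb₃⟩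
    exact ⟨C.add_mem ha₁ hb₁, D.add_mem ha₂ hb₂, by simp [ha₃, hb₃]⟩
  zero_mem' := ⟨C.zero_mem, D.zero_mem, by simp⟩
  smul_mem' := by
    rintro r a ⟨h₁, h₂, h₃⟩
    exact ⟨C.smul_mem r h₁, D.smul_mem r h₂, by simp [h₃]⟩

theorem hammingNorm_smul_of_ne_zero {ι R M : Type*} [Fintype ι] [Semiring R] [IsCancelMulZero R]
    [AddCommMonoid M] [Module R M] [Module.IsTorsionFree R M] [DecidableEq M]
    {k : R} (hk : k ≠ 0) (x : ι → M) : hammingNorm (k • x) = hammingNorm x :=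
  hammingNorm_smul (fun _ => IsSMulRegular.of_ne_zero hk) x

section ConnSum

variable {F : Type*} [Field F] {n m : ℕ} {C : Submodule F (Fin (n + 1) → F)}
  {D : Submodule F (Fin (m + 1) → F)} {c : Fin (n + 1) → F} {d : Fin (m + 1) → F}

theorem mk_zero_mem_connSum (hc : c ∈ C) (hcn : c (Fin.last n) = 0) :
    (c, 0) ∈ connSum F C D :=
  ⟨hc, D.zero_mem, by simp [hcn]⟩

theorem zero_mk_mem_connSum (hd : d ∈ D) (hdm : d (Fin.last m) = 0) :
    (0, d) ∈ connSum F C D :=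
  ⟨C.zero_mem, hd, by simp [hdm]⟩

theorem mk_smul_mem_connSum (hc : c ∈ C) (hd : d ∈ D) (hdm : d (Fin.last m) ≠ 0) :
    (c, (c (Fin.last n) / d (Fin.last m)) • d) ∈ connSum F C D :=
  ⟨hc, D.smul_mem _ hd, by simp [div_mul_cancel₀ _ hdm]⟩

end ConnSum

/-- The minimum distance (in `ℕ∞`, with `sInf ∅ = ∞`) of the
connected-sum code `C # D` equals
`min (d(C'), d(D'), sInf {wt c + wt d : c ∈ C, cₙ ≠ 0, d ∈ D, dₘ ≠ 0})`,
where `C' = {c ∈ C | cₙ = 0}` and `D' = {d ∈ D | dₘ = 0}`. -/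
theorem stmt3 (F : Type*) [Field F] [DecidableEq F] (n m : ℕ)
    (C : Submodule F (Fin (n + 1) → F)) (D : Submodule F (Fin (m + 1) → F)) :
    sInf {w : ℕ∞ | ∃ x ∈ connSum F C D, x ≠ 0 ∧
        w = (hammingNorm x.1 : ℕ∞) + (hammingNorm x.2 : ℕ∞)} =
      min (min
        (sInf {w : ℕ∞ | ∃ c ∈ C, c (Fin.last n) = 0 ∧ c ≠ 0 ∧ w = (hammingNorm c : ℕ∞)})
        (sInf {w : ℕ∞ | ∃ d ∈ D, d (Fin.last m) = 0 ∧ d ≠ 0 ∧ w = (hammingNorm d : ℕ∞)}))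
        (sInf {w : ℕ∞ | ∃ c ∈ C, c (Fin.last n) ≠ 0 ∧ ∃ d ∈ D, d (Fin.last m) ≠ 0 ∧
          w = (hammingNorm c : ℕ∞) + (hammingNorm d : ℕ∞)}) := by
  apply le_antisymm
  · refine le_min (le_min (sInf_le_sInf ?_) (sInf_le_sInf ?_)) (sInf_le_sInf ?_)
    · rintro _ ⟨c, hc, hcn, hc0, rfl⟩
      exact ⟨_, mk_zero_mem_connSum hc hcn, by simp [hc0], by simp⟩
    · rintro _ ⟨d, hd, hdm, hd0, rfl⟩
      exact ⟨_, zero_mk_mem_connSum hd hdm, by simp [hd0], by simp⟩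
    · rintro _ ⟨c, hc, hcn, d, hd, hdm, rfl⟩
      refine ⟨_, mk_smul_mem_connSum hc hd hdm, fun h => hcn ?_, ?_⟩
      · simp [(Prod.mk_eq_zero.1 h).1]
      · rw [hammingNorm_smul_of_ne_zero (div_ne_zero hcn hdm)]
  · refine le_sInf ?_
    rintro _ ⟨⟨c, d⟩, ⟨hc, hd, hlast : c (Fin.last n) = d (Fin.last m)⟩, hne, rfl⟩
    rcases eq_or_ne (c (Fin.last n)) 0 with hcn | hcn
    · have hdm : d (Fin.last m) = 0 := hlast ▸ hcn
      rcases eq_or_ne c 0 with rfl | hc0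
      · have hd0 : d ≠ 0 := fun h => hne (by simp [h])
        exact min_le_of_left_le <| min_le_of_right_le <|
          le_trans (sInf_le ⟨d, hd, hdm, hd0, rfl⟩) le_add_self
      · exact min_le_of_left_le <| min_le_of_left_le <|
          le_trans (sInf_le ⟨c, hc, hcn, hc0, rfl⟩) le_self_add
    · exact min_le_of_right_le (sInf_le ⟨c, hc, hcn, d, hd, hlast ▸ hcn, rfl⟩)
end

section
/- Let F be a finite field with q elements and let C ⊆ F^n and D ⊆ F^m be linear codes. For a linear code E let a_w(E) denote the number of codewords of E of Hamming weight w. Then for every natural number w, (q−1)·a_w(C # D) = (q−1)·Σ_{u+v=w} a_u(C')·a_v(D') + Σ_{u+v=w} (a_u(C) − a_u(C'))·(a_v(D) − a_v(D')), the sums ranging over pairs (u,v) of natural numbers with u + v = w. Equivalently, the weight enumerators satisfy W_{C#D}(T) = W_{C'}(T)·W_{D'}(T) + (1/(q−1))·(W_C(T) − W_{C'}(T))·(W_D(T) − W_{D'}(T)). -/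
open Finset

section aux

variable {α β : Type*} [Fintype α] [Fintype β]

lemma card_filter_iff {α : Type*} [Fintype α] (p q : α → Prop)
    [DecidablePred p] [DecidablePred q] (h : ∀ x, p x ↔ q x) :
    (univ.filter p).card = (univ.filter q).card := by
  rw [filter_congr fun x _ => h x]

lemma card_filter_prod (P : α → Prop) (Q : β → Prop) [DecidablePred P] [DecidablePred Q] :
    (univ.filter fun x : α × β => P x.1 ∧ Q x.2).card =
      (univ.filter P).card * (univ.filter Q).card := by
  rw [← Finset.univ_product_univ, Finset.filter_product, Finset.card_product]

lemma pair_count (P : α → Prop) (Q : β → Prop) [DecidablePred P] [DecidablePred Q]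
    (f : α → ℕ) (g : β → ℕ) (w : ℕ) :
    (univ.filter fun x : α × β => P x.1 ∧ Q x.2 ∧ f x.1 + g x.2 = w).card =
      ∑ p ∈ Finset.HasAntidiagonal.antidiagonal w,
        (univ.filter fun c => P c ∧ f c = p.1).card *
          (univ.filter fun d => Q d ∧ g d = p.2).card := by
  rw [card_eq_sum_card_fiberwise (f := fun x : α × β => (f x.1, g x.2))
      (t := Finset.HasAntidiagonal.antidiagonal w)
      (fun x hx => by
        simp only [Finset.mem_coe, mem_filter] at hx
        simp [Finset.HasAntidiagonal.mem_antidiagonal, hx.2.2.2])]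
  refine Finset.sum_congr rfl fun p hp => ?_
  rw [Finset.HasAntidiagonal.mem_antidiagonal] at hp
  rw [filter_filter]
  have : (univ.filter fun x : α × β =>
      (P x.1 ∧ Q x.2 ∧ f x.1 + g x.2 = w) ∧ (f x.1, g x.2) = p) =
      (univ.filter fun x : α × β => (P x.1 ∧ f x.1 = p.1) ∧ (Q x.2 ∧ g x.2 = p.2)) := by
    apply filter_congr
    intro x _
    constructor
    · rintro ⟨⟨h1, h2, h3⟩, h4⟩
      rw [Prod.mk.injEq] at h4
      exact ⟨⟨h1, h4.1⟩, h2, h4.2⟩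
    · rintro ⟨⟨h1, h4⟩, h2, h5⟩
      exact ⟨⟨h1, h2, by omega⟩, by rw [Prod.mk.injEq]; exact ⟨h4, h5⟩⟩
  rw [this]
  exact card_filter_prod (fun c => P c ∧ f c = p.1) (fun d => Q d ∧ g d = p.2)

lemma split_by {F : Type*} [Fintype F] [DecidableEq F] (P : α → Prop) [DecidablePred P]
    (h : α → F) :
    (univ.filter P).card = ∑ a : F, (univ.filter fun x => P x ∧ h x = a).card := by
  rw [card_eq_sum_card_fiberwise (f := h) (t := (univ : Finset F)) (fun x _ => mem_univ _)]
  exact Finset.sum_congr rfl fun a _ => by rw [filter_filter]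

end aux

lemma scale_card {F : Type*} [Field F] {ι : Type*} [Fintype ι] [DecidableEq F]
    (C : Submodule F (ι → F)) (i0 : ι)
    {a b : F} (ha : a ≠ 0) (hb : b ≠ 0) (u : ℕ) :
    Nat.card {c : ι → F // c ∈ C ∧ c i0 = a ∧ hammingNorm c = u} =
      Nat.card {c : ι → F // c ∈ C ∧ c i0 = b ∧ hammingNorm c = u} := by
  apply Nat.card_congr
  have key : ∀ (s t : F), s ≠ 0 → t ≠ 0 → ∀ c : ι → F,
      (c ∈ C ∧ c i0 = s ∧ hammingNorm c = u) →
      ((t * s⁻¹) • c ∈ C ∧ ((t * s⁻¹) • c) i0 = t ∧ hammingNorm ((t * s⁻¹) • c) = u) := by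
    intro s t hs ht c ⟨h1, h2, h3⟩
    refine ⟨C.smul_mem _ h1, ?_, ?_⟩
    · simp [h2, mul_assoc, inv_mul_cancel₀ hs]
    · rw [hammingNorm_smul (fun i => ?_) c, h3]
      intro x y hxy
      simpa [smul_eq_mul] using
        mul_left_cancel₀ (mul_ne_zero ht (inv_ne_zero hs)) hxy
  refine ⟨fun c => ⟨(b * a⁻¹) • c.1, key a b ha hb c.1 c.2⟩,
    fun c => ⟨(a * b⁻¹) • c.1, key b a hb ha c.1 c.2⟩, fun c => ?_, fun c => ?_⟩ <;>
  · ext i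
    simp only [Pi.smul_apply, smul_eq_mul]
    field_simp

/-- Splitting the weight-`u` count of a code by last coordinate being 0 or not. -/
lemma count_split {F : Type*} [Field F] [Fintype F] [DecidableEq F]
    {ι : Type*} [Fintype ι] [DecidableEq ι] (C : Submodule F (ι → F)) (i0 : ι) (u : ℕ)
    [DecidablePred (· ∈ C)] :
    (univ.filter fun c : ι → F => c ∈ C ∧ hammingNorm c = u).card =
      (univ.filter fun c : ι → F => c ∈ C ∧ c i0 = 0 ∧ hammingNorm c = u).card +
      (Fintype.card F - 1) *
        (univ.filter fun c : ι → F => c ∈ C ∧ c i0 = 1 ∧ hammingNorm c = u).card := by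
  classical
  rw [split_by (fun c : ι → F => c ∈ C ∧ hammingNorm c = u) (fun c => c i0)]
  rw [← Finset.add_sum_erase _ _ (mem_univ (0 : F))]
  congr 1
  · exact card_filter_iff _ _ (fun x => by tauto)
  have step : ∀ a ∈ univ.erase (0 : F),
      (univ.filter fun c : ι → F => (c ∈ C ∧ hammingNorm c = u) ∧ c i0 = a).card =
      (univ.filter fun c : ι → F => c ∈ C ∧ c i0 = 1 ∧ hammingNorm c = u).card := by
    intro a ha
    have ha0 : a ≠ 0 := (Finset.mem_erase.mp ha).1
    rw [card_filter_iff (fun c : ι → F => (c ∈ C ∧ hammingNorm c = u) ∧ c i0 = a)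
        (fun c : ι → F => c ∈ C ∧ c i0 = a ∧ hammingNorm c = u) (fun x => by tauto)]
    have h := scale_card C i0 ha0 (one_ne_zero (α := F)) u
    simpa only [Nat.card_eq_fintype_card, Fintype.card_subtype] using h
  rw [Finset.sum_congr rfl step, Finset.sum_const, smul_eq_mul,
    Finset.card_erase_of_mem (mem_univ _), Finset.card_univ]



/-- the weight enumerator identity
`(q−1)·a_w(C#D) = (q−1)·Σ_{u+v=w} a_u(C')·a_v(D') + Σ_{u+v=w} (a_u(C)−a_u(C'))·(a_v(D)−a_v(D'))`
for all `w`, where `a_w(E)` counts codewords of weight `w`, `q = |F|`,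
`C' = {c ∈ C | cₙ = 0}` and `D' = {d ∈ D | dₘ = 0}`. -/
theorem stmt4 (F : Type*) [Field F] [Fintype F] [DecidableEq F] (n m : ℕ)
    (C : Submodule F (Fin (n + 1) → F)) (D : Submodule F (Fin (m + 1) → F))
    (q : ℕ) (hq : q = Fintype.card F) :
    ∀ w : ℕ,
      (q - 1) * Nat.card {x : (Fin (n + 1) → F) × (Fin (m + 1) → F) //
          x ∈ connSum F C D ∧ hammingNorm x.1 + hammingNorm x.2 = w} =
      (q - 1) * ∑ p ∈ Finset.HasAntidiagonal.antidiagonal w,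
          (Nat.card {c : Fin (n + 1) → F //
              c ∈ C ∧ c (Fin.last n) = 0 ∧ hammingNorm c = p.1}) *
          (Nat.card {d : Fin (m + 1) → F //
              d ∈ D ∧ d (Fin.last m) = 0 ∧ hammingNorm d = p.2}) +
      ∑ p ∈ Finset.HasAntidiagonal.antidiagonal w,
          (Nat.card {c : Fin (n + 1) → F // c ∈ C ∧ hammingNorm c = p.1} -
           Nat.card {c : Fin (n + 1) → F //
              c ∈ C ∧ c (Fin.last n) = 0 ∧ hammingNorm c = p.1}) *
          (Nat.card {d : Fin (m + 1) → F // d ∈ D ∧ hammingNorm d = p.2} -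
           Nat.card {d : Fin (m + 1) → F //
              d ∈ D ∧ d (Fin.last m) = 0 ∧ hammingNorm d = p.2}) := by
  classical
  intro w
  simp only [Nat.card_eq_fintype_card, Fintype.card_subtype]
  have mem_cs : ∀ x : (Fin (n + 1) → F) × (Fin (m + 1) → F),
      x ∈ connSum F C D ↔
        x.1 ∈ C ∧ x.2 ∈ D ∧ x.1 (Fin.last n) = x.2 (Fin.last m) := fun x => Iff.rfl
  -- scaling: counts with fixed nonzero last coordinate don't depend on its value
  have scaleC : ∀ a : F, a ≠ 0 → ∀ u : ℕ,
      (univ.filter fun c : Fin (n + 1) → F =>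
        c ∈ C ∧ c (Fin.last n) = a ∧ hammingNorm c = u).card =
      (univ.filter fun c : Fin (n + 1) → F =>
        c ∈ C ∧ c (Fin.last n) = 1 ∧ hammingNorm c = u).card := by
    intro a ha u
    have h := scale_card C (Fin.last n) ha (one_ne_zero (α := F)) u
    simpa only [Nat.card_eq_fintype_card, Fintype.card_subtype] using h
  have scaleD : ∀ a : F, a ≠ 0 → ∀ v : ℕ,
      (univ.filter fun d : Fin (m + 1) → F =>
        d ∈ D ∧ d (Fin.last m) = a ∧ hammingNorm d = v).card =
      (univ.filter fun d : Fin (m + 1) → F =>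
        d ∈ D ∧ d (Fin.last m) = 1 ∧ hammingNorm d = v).card := by
    intro a ha v
    have h := scale_card D (Fin.last m) ha (one_ne_zero (α := F)) v
    simpa only [Nat.card_eq_fintype_card, Fintype.card_subtype] using h
  -- the connected sum count, decomposed
  have lhsEq :
      (univ.filter fun x : (Fin (n + 1) → F) × (Fin (m + 1) → F) =>
          x ∈ connSum F C D ∧ hammingNorm x.1 + hammingNorm x.2 = w).card =
      (∑ p ∈ Finset.HasAntidiagonal.antidiagonal w,
        (univ.filter fun c : Fin (n + 1) → F =>
          c ∈ C ∧ c (Fin.last n) = 0 ∧ hammingNorm c = p.1).card *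
        (univ.filter fun d : Fin (m + 1) → F =>
          d ∈ D ∧ d (Fin.last m) = 0 ∧ hammingNorm d = p.2).card) +
      (q - 1) * ∑ p ∈ Finset.HasAntidiagonal.antidiagonal w,
        (univ.filter fun c : Fin (n + 1) → F =>
          c ∈ C ∧ c (Fin.last n) = 1 ∧ hammingNorm c = p.1).card *
        (univ.filter fun d : Fin (m + 1) → F =>
          d ∈ D ∧ d (Fin.last m) = 1 ∧ hammingNorm d = p.2).card := by
    rw [split_by (fun x : (Fin (n + 1) → F) × (Fin (m + 1) → F) =>
        x ∈ connSum F C D ∧ hammingNorm x.1 + hammingNorm x.2 = w)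
        (fun x => x.1 (Fin.last n))]
    have inner : ∀ a : F,
        (univ.filter fun x : (Fin (n + 1) → F) × (Fin (m + 1) → F) =>
          (x ∈ connSum F C D ∧ hammingNorm x.1 + hammingNorm x.2 = w) ∧
            x.1 (Fin.last n) = a).card =
        ∑ p ∈ Finset.HasAntidiagonal.antidiagonal w,
          (univ.filter fun c : Fin (n + 1) → F =>
            c ∈ C ∧ c (Fin.last n) = a ∧ hammingNorm c = p.1).card *
          (univ.filter fun d : Fin (m + 1) → F =>
            d ∈ D ∧ d (Fin.last m) = a ∧ hammingNorm d = p.2).card := by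
      intro a
      rw [card_filter_iff _
        (fun x : (Fin (n + 1) → F) × (Fin (m + 1) → F) =>
          (x.1 ∈ C ∧ x.1 (Fin.last n) = a) ∧ (x.2 ∈ D ∧ x.2 (Fin.last m) = a) ∧
            hammingNorm x.1 + hammingNorm x.2 = w)
        (fun x => by
          rw [mem_cs]
          constructor
          · rintro ⟨⟨⟨h1, h2, h3⟩, h4⟩, h5⟩
            exact ⟨⟨h1, h5⟩, ⟨h2, h5 ▸ h3.symm ▸ rfl⟩, h4⟩
          · rintro ⟨⟨h1, h5⟩, ⟨h2, h6⟩, h4⟩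
            exact ⟨⟨⟨h1, h2, h5.trans h6.symm⟩, h4⟩, h5⟩)]
      rw [pair_count (fun c : Fin (n + 1) → F => c ∈ C ∧ c (Fin.last n) = a)
        (fun d : Fin (m + 1) → F => d ∈ D ∧ d (Fin.last m) = a)
        hammingNorm hammingNorm w]
      refine Finset.sum_congr rfl fun p _ => ?_
      rw [card_filter_iff (fun c : Fin (n + 1) → F =>
            (c ∈ C ∧ c (Fin.last n) = a) ∧ hammingNorm c = p.1)
          (fun c => c ∈ C ∧ c (Fin.last n) = a ∧ hammingNorm c = p.1) (fun x => by tauto),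
        card_filter_iff (fun d : Fin (m + 1) → F =>
            (d ∈ D ∧ d (Fin.last m) = a) ∧ hammingNorm d = p.2)
          (fun d => d ∈ D ∧ d (Fin.last m) = a ∧ hammingNorm d = p.2) (fun x => by tauto)]
    rw [Finset.sum_congr rfl fun a _ => inner a,
      ← Finset.add_sum_erase _ _ (mem_univ (0 : F))]
    congr 1
    have step : ∀ a ∈ univ.erase (0 : F),
        (∑ p ∈ Finset.HasAntidiagonal.antidiagonal w,
          (univ.filter fun c : Fin (n + 1) → F =>
            c ∈ C ∧ c (Fin.last n) = a ∧ hammingNorm c = p.1).card *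
          (univ.filter fun d : Fin (m + 1) → F =>
            d ∈ D ∧ d (Fin.last m) = a ∧ hammingNorm d = p.2).card) =
        ∑ p ∈ Finset.HasAntidiagonal.antidiagonal w,
          (univ.filter fun c : Fin (n + 1) → F =>
            c ∈ C ∧ c (Fin.last n) = 1 ∧ hammingNorm c = p.1).card *
          (univ.filter fun d : Fin (m + 1) → F =>
            d ∈ D ∧ d (Fin.last m) = 1 ∧ hammingNorm d = p.2).card := by
      intro a ha
      have ha0 : a ≠ 0 := (Finset.mem_erase.mp ha).1
      exact Finset.sum_congr rfl fun p _ => by rw [scaleC a ha0, scaleD a ha0]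
    rw [Finset.sum_congr rfl step, Finset.sum_const, smul_eq_mul,
      Finset.card_erase_of_mem (mem_univ _), Finset.card_univ, hq]
  rw [lhsEq]
  -- rewrite the subtraction terms
  have subC : ∀ u : ℕ,
      (univ.filter fun c : Fin (n + 1) → F => c ∈ C ∧ hammingNorm c = u).card -
      (univ.filter fun c : Fin (n + 1) → F =>
        c ∈ C ∧ c (Fin.last n) = 0 ∧ hammingNorm c = u).card =
      (q - 1) * (univ.filter fun c : Fin (n + 1) → F =>
        c ∈ C ∧ c (Fin.last n) = 1 ∧ hammingNorm c = u).card := by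
    intro u
    have h := count_split C (Fin.last n) u
    rw [hq, h, Nat.add_sub_cancel_left]
  have subD : ∀ v : ℕ,
      (univ.filter fun d : Fin (m + 1) → F => d ∈ D ∧ hammingNorm d = v).card -
      (univ.filter fun d : Fin (m + 1) → F =>
        d ∈ D ∧ d (Fin.last m) = 0 ∧ hammingNorm d = v).card =
      (q - 1) * (univ.filter fun d : Fin (m + 1) → F =>
        d ∈ D ∧ d (Fin.last m) = 1 ∧ hammingNorm d = v).card := by
    intro v
    have h := count_split D (Fin.last m) v
    rw [hq, h, Nat.add_sub_cancel_left]
  have rhs2 :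
      (∑ p ∈ Finset.HasAntidiagonal.antidiagonal w,
        ((univ.filter fun c : Fin (n + 1) → F => c ∈ C ∧ hammingNorm c = p.1).card -
         (univ.filter fun c : Fin (n + 1) → F =>
            c ∈ C ∧ c (Fin.last n) = 0 ∧ hammingNorm c = p.1).card) *
        ((univ.filter fun d : Fin (m + 1) → F => d ∈ D ∧ hammingNorm d = p.2).card -
         (univ.filter fun d : Fin (m + 1) → F =>
            d ∈ D ∧ d (Fin.last m) = 0 ∧ hammingNorm d = p.2).card)) =
      (q - 1) * ((q - 1) * ∑ p ∈ Finset.HasAntidiagonal.antidiagonal w,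
        (univ.filter fun c : Fin (n + 1) → F =>
          c ∈ C ∧ c (Fin.last n) = 1 ∧ hammingNorm c = p.1).card *
        (univ.filter fun d : Fin (m + 1) → F =>
          d ∈ D ∧ d (Fin.last m) = 1 ∧ hammingNorm d = p.2).card) := by
    rw [Finset.mul_sum, Finset.mul_sum]
    refine Finset.sum_congr rfl fun p _ => ?_
    rw [subC p.1, subD p.2]
    ring
  rw [rhs2]
  ring
end

section
/- Let F be a field, n ≥ 3 an integer, and C ⊆ F^n a linear code with 2·dim_F(C) < n − 1. Then the dual code C^⊥ is not the knot code of any Fox-type parity check matrix: for every nonzero t ∈ F, every map σ : Fin n → Fin n with σ(i) ≠ i and σ(i) ≠ i + 1 (mod n) for every i, and every ε : Fin n → Bool, with H the associated Fox-type parity check matrix, one has C^⊥ ≠ {x ∈ F^n : H·x = 0}. -/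
/-- The dual code of a linear code `C ⊆ F^n`, with respect to the standard
bilinear form `⟨x, c⟩ = Σᵢ xᵢ · cᵢ`. -/
def dualCode (F : Type*) [Field F] (n : ℕ) (C : Submodule F (Fin n → F)) :
    Submodule F (Fin n → F) where
  carrier := {x | ∀ c ∈ C, ∑ i, x i * c i = 0}
  add_mem' := by
    intro a b ha hb c hc
    simp only [Pi.add_apply, add_mul, Finset.sum_add_distrib, ha c hc, hb c hc, add_zero]
  zero_mem' := by
    intro c hc
    simp
  smul_mem' := by
    intro r x hx c hc
    simp only [Pi.smul_apply, smul_eq_mul, mul_assoc, ← Finset.mul_sum, hx c hc, mul_zero]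

lemma piToDual_apply {F : Type*} [Field F] {n : ℕ} (x c : Fin n → F) :
    (Pi.basisFun F (Fin n)).toDual x c = ∑ i, x i * c i := by
  have hc : c = ∑ i, c i • (Pi.basisFun F (Fin n)) i := by
    ext j
    simp [Pi.basisFun_apply, Pi.single_apply]
  conv_lhs => rw [hc]
  rw [map_sum]
  rw [Finset.sum_congr rfl (fun i _ => by
    rw [map_smul, smul_eq_mul, Module.Basis.toDual_apply_left, Pi.basisFun_repr])]
  exact Finset.sum_congr rfl fun i _ => mul_comm _ _

/-- Embedding of `Fin (n/2)` as the even indices of `Fin n`. -/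
def foxEmb (n : ℕ) (k : Fin (n / 2)) : Fin n :=
  ⟨2 * k.1, by have := k.isLt; omega⟩

/-- The column index `2k + b`. -/
def foxCol (n : ℕ) (k : Fin (n / 2)) (b : Bool) : Fin n :=
  ⟨2 * k.1 + b.toNat, by have := k.isLt; cases b <;> simp <;> omega⟩

/-- The even-indexed rows of a Fox-type parity check matrix are linearly independent. -/
lemma fox_rows_li {F : Type*} [Field F] {n : ℕ} [NeZero n]
    (t : F) (ht : t ≠ 0)
    (σ : Fin n → Fin n) (hσ1 : ∀ i, σ i ≠ i) (hσ2 : ∀ i, σ i ≠ i + 1)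
    (ε : Fin n → Bool) (H : Matrix (Fin n) (Fin n) F)
    (hH : ∀ i j, H i j =
        if j = σ i then 1 - t
        else if j = i then (if ε i then -1 else t)
        else if j = i + 1 then (if ε i then t else -1)
        else 0) :
    LinearIndependent F (fun k : Fin (n / 2) => H (foxEmb n k)) := by
  classical
  rw [Fintype.linearIndependent_iff]
  intro g hg
  have key : ∀ k : Fin (n / 2), g k ≠ 0 → ∀ b : Bool,
      ∃ k' : Fin (n / 2), g k' ≠ 0 ∧ σ (foxEmb n k') = foxCol n k b := by
    intro k hk b
    have h0 : ∑ k' : Fin (n / 2), g k' * H (foxEmb n k') (foxCol n k b) = 0 := by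
      have := congrFun hg (foxCol n k b)
      simpa [Finset.sum_apply] using this
    have hcolk : foxCol n k b ≠ σ (foxEmb n k) := by
      cases b
      · have hcb : foxCol n k false = foxEmb n k := by
          apply Fin.ext; simp [foxCol, foxEmb]
        rw [hcb]; exact fun hcc => hσ1 (foxEmb n k) hcc.symm
      · have hcb : foxCol n k true = foxEmb n k + 1 := by
          apply Fin.ext
          have h1 : (2 * k.1 + 1) < n := by have := k.isLt; omega
          simp [foxCol, foxEmb, Fin.add_def, Nat.mod_eq_of_lt h1]
        rw [hcb]; exact fun hcc => hσ2 (foxEmb n k) hcc.symm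
    have hne : H (foxEmb n k) (foxCol n k b) ≠ 0 := by
      rw [hH, if_neg hcolk]
      cases b
      · have hcb : foxCol n k false = foxEmb n k := by
          apply Fin.ext; simp [foxCol, foxEmb]
        rw [if_pos hcb]
        cases hε : ε (foxEmb n k) <;> simp [ht, neg_ne_zero]
      · have hcb1 : foxCol n k true ≠ foxEmb n k := by
          intro hcc
          have := congrArg Fin.val hcc
          simp [foxCol, foxEmb] at this
        have hcb2 : foxCol n k true = foxEmb n k + 1 := by
          apply Fin.ext
          have h1 : (2 * k.1 + 1) < n := by have := k.isLt; omega
          simp [foxCol, foxEmb, Fin.add_def, Nat.mod_eq_of_lt h1]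
        rw [if_neg hcb1, if_pos hcb2]
        cases hε : ε (foxEmb n k) <;> simp [ht, neg_ne_zero]
    have hrow : ∀ k' : Fin (n / 2), H (foxEmb n k') (foxCol n k b) =
        (if foxCol n k b = σ (foxEmb n k') then 1 - t else 0) +
          (if k' = k then H (foxEmb n k) (foxCol n k b) else 0) := by
      intro k'
      by_cases hkk : k' = k
      · subst hkk
        rw [if_pos rfl, if_neg hcolk, zero_add]
      · rw [if_neg hkk, add_zero]
        by_cases hc : foxCol n k b = σ (foxEmb n k')
        · rw [hH, if_pos hc, if_pos hc]
        · rw [hH, if_neg hc, if_neg hc]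
          have hvk : k.1 ≠ k'.1 := fun hcc => hkk (Fin.ext hcc.symm)
          have hcb1 : foxCol n k b ≠ foxEmb n k' := by
            intro hcc
            have := congrArg Fin.val hcc
            cases b <;> simp [foxCol, foxEmb] at this <;> omega
          have hcb2 : foxCol n k b ≠ foxEmb n k' + 1 := by
            intro hcc
            have h1 : (2 * k'.1 + 1) < n := by have := k'.isLt; omega
            have := congrArg Fin.val hcc
            simp [foxCol, foxEmb, Fin.add_def, Nat.mod_eq_of_lt h1] at this
            cases b <;> simp at this <;> omega
          rw [if_neg hcb1, if_neg hcb2]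
    have hsplit : ∑ k' : Fin (n / 2),
        g k' * (if foxCol n k b = σ (foxEmb n k') then 1 - t else 0) =
          - (g k * H (foxEmb n k) (foxCol n k b)) := by
      have h1 : ∑ k' : Fin (n / 2), g k' * H (foxEmb n k') (foxCol n k b) =
          (∑ k' : Fin (n / 2),
            g k' * (if foxCol n k b = σ (foxEmb n k') then 1 - t else 0)) +
            g k * H (foxEmb n k) (foxCol n k b) := by
        rw [Finset.sum_congr rfl (fun k' _ => by rw [hrow k', mul_add]),
          Finset.sum_add_distrib]
        congr 1
        rw [Finset.sum_congr rfl (fun k' _ => by rw [mul_ite, mul_zero])]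
        simp
      rw [h1] at h0
      exact eq_neg_of_add_eq_zero_left h0
    have hsum_ne : (∑ k' : Fin (n / 2),
        g k' * (if foxCol n k b = σ (foxEmb n k') then 1 - t else 0)) ≠ 0 := by
      rw [hsplit]
      exact neg_ne_zero.mpr (mul_ne_zero hk hne)
    obtain ⟨k', -, hk'⟩ := Finset.exists_ne_zero_of_sum_ne_zero hsum_ne
    by_cases hc : foxCol n k b = σ (foxEmb n k')
    · exact ⟨k', fun hg0 => hk' (by rw [hg0, zero_mul]), hc.symm⟩
    · exact absurd (by rw [if_neg hc, mul_zero]) hk'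
  intro i
  by_contra hi
  let T := {k : Fin (n / 2) // g k ≠ 0}
  let f : T × Bool → T := fun p =>
    ⟨Classical.choose (key p.1.1 p.1.2 p.2), (Classical.choose_spec (key p.1.1 p.1.2 p.2)).1⟩
  have hf : ∀ p : T × Bool, σ (foxEmb n (f p).1) = foxCol n p.1.1 p.2 := fun p =>
    (Classical.choose_spec (key p.1.1 p.1.2 p.2)).2
  have hinj : Function.Injective f := by
    rintro ⟨⟨p1, hp1⟩, pb⟩ ⟨⟨q1, hq1⟩, qb⟩ hpq
    have h1 : foxCol n p1 pb = foxCol n q1 qb := by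
      rw [← hf (⟨⟨p1, hp1⟩, pb⟩ : T × Bool), ← hf (⟨⟨q1, hq1⟩, qb⟩ : T × Bool)]
      exact congrArg (fun j : T => σ (foxEmb n j.1)) hpq
    have h2 := congrArg Fin.val h1
    simp only [foxCol] at h2
    have h3 : p1.1 = q1.1 ∧ pb = qb := by
      cases pb <;> cases qb <;> simp at h2 ⊢ <;> omega
    simp only [Prod.mk.injEq, Subtype.mk.injEq]
    exact ⟨Subtype.ext (Fin.ext h3.1), h3.2⟩
  have hcard := Fintype.card_le_of_injective f hinj
  rw [Fintype.card_prod, Fintype.card_bool] at hcard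
  have hpos : 0 < Fintype.card T := Fintype.card_pos_iff.mpr ⟨⟨i, hi⟩⟩
  omega

/-- If `C ⊆ F^n` (`n ≥ 3`) is a linear code with `2 · dim C < n − 1`,
then `C^⊥` is not the knot code of any Fox-type parity check matrix. -/
theorem stmt6 (F : Type*) [Field F] (n : ℕ) [NeZero n] (hn : 3 ≤ n)
    (C : Submodule F (Fin n → F))
    (hdim : 2 * Module.finrank F C < n - 1) :
    ∀ (t : F), t ≠ 0 →
    ∀ (σ : Fin n → Fin n), (∀ i, σ i ≠ i) → (∀ i, σ i ≠ i + 1) →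
    ∀ (ε : Fin n → Bool) (H : Matrix (Fin n) (Fin n) F),
      (∀ i j, H i j =
        if j = σ i then 1 - t
        else if j = i then (if ε i then -1 else t)
        else if j = i + 1 then (if ε i then t else -1)
        else 0) →
      dualCode F n C ≠ LinearMap.ker H.mulVecLin := by
  intro t ht σ hσ1 hσ2 ε H hH heq
  classical
  -- finrank of the dual code
  have hd1 : dualCode F n C = (Submodule.dualAnnihilator C).comap
      ((Pi.basisFun F (Fin n)).toDualEquiv :
        (Fin n → F) →ₗ[F] Module.Dual F (Fin n → F)) := by
    ext x
    simp only [Submodule.mem_comap, LinearEquiv.coe_coe, Module.Basis.toDualEquiv_apply,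
      Submodule.mem_dualAnnihilator]
    constructor
    · intro hx c hc
      rw [piToDual_apply]
      exact hx c hc
    · intro hx c hc
      have := hx c hc
      rwa [piToDual_apply] at this
  have hfr : Module.finrank F (dualCode F n C) =
      Module.finrank F (Submodule.dualAnnihilator C) := by
    rw [hd1, Submodule.comap_equiv_eq_map_symm]
    exact LinearEquiv.finrank_map_eq _ _
  have hq : Module.finrank F (Submodule.dualAnnihilator C) =
      Module.finrank F ((Fin n → F) ⧸ C) :=
    (Subspace.quotEquivAnnihilator C).finrank_eq.symm
  have hq2 : Module.finrank F ((Fin n → F) ⧸ C) + Module.finrank F C =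
      Module.finrank F (Fin n → F) := Submodule.finrank_quotient_add_finrank C
  have hfin : Module.finrank F (Fin n → F) = n := Module.finrank_fin_fun F
  -- rank-nullity for H
  have hrn := LinearMap.finrank_range_add_finrank_ker H.mulVecLin
  rw [hfin] at hrn
  -- rank lower bound from independent rows
  have hli := fox_rows_li t ht σ hσ1 hσ2 ε H hH
  have hmem : ∀ k : Fin (n / 2), H (foxEmb n k) ∈ LinearMap.range H.transpose.mulVecLin := by
    intro k
    refine ⟨Pi.single (foxEmb n k) 1, ?_⟩
    rw [Matrix.mulVecLin_apply, Matrix.mulVec_single_one, Matrix.col_transpose, Matrix.row_apply']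
  have hli' : LinearIndependent F
      (fun k : Fin (n / 2) => (⟨H (foxEmb n k), hmem k⟩ :
        LinearMap.range H.transpose.mulVecLin)) := by
    apply LinearIndependent.of_comp (LinearMap.range H.transpose.mulVecLin).subtype
    exact hli
  have hcard := hli'.fintype_card_le_finrank
  rw [Fintype.card_fin] at hcard
  -- x transpose rank
  have htr2 : Module.finrank F (LinearMap.range H.transpose.mulVecLin) =
      Module.finrank F (LinearMap.range H.mulVecLin) := Matrix.rank_transpose H
  have hker : Module.finrank F (dualCode F n C) =
      Module.finrank F (LinearMap.ker H.mulVecLin) := by rw [heq]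
  have hCle := Submodule.finrank_le C
  omega
end

section
/- Let a and b be coprime positive integers and let P ∈ ℤ[X] be the polynomial satisfying P·(X^a − 1)·(X^b − 1) = (X^{ab} − 1)·(X − 1) in ℤ[X]. If a and b are both odd, then P evaluated at −1 equals 1. If a is odd and b is even, then P evaluated at −1 equals a. -/
open Polynomial

variable {R : Type*} [CommRing R] [IsDomain R]

/-- For even `b` the factor `X ^ b - 1` vanishes at `-1`, so it is cancelled before evaluating. -/
theorem mul_X_pow_sub_one_eq_geom_sum_mul {a b : ℕ} (hb : 0 < b) {P : R[X]}
    (hP : P * ((X ^ a - 1) * (X ^ b - 1)) = (X ^ (a * b) - 1) * (X - 1)) :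
    P * (X ^ a - 1) = (∑ i ∈ Finset.range a, (X ^ b) ^ i) * (X - 1) := by
  have hfac : (X : R[X]) ^ (a * b) - 1 = (∑ i ∈ Finset.range a, (X ^ b) ^ i) * (X ^ b - 1) := by
    rw [geom_sum_mul, ← pow_mul, mul_comm b a]
  have hne : (X : R[X]) ^ b - 1 ≠ 0 := by
    simpa only [map_one] using X_pow_sub_C_ne_zero hb (1 : R)
  apply mul_right_cancel₀ hne
  rw [mul_assoc, hP, hfac]
  ring

variable [NeZero (2 : R)]

theorem eval_neg_one_eq_one_of_odd_of_odd {a b : ℕ} (ha : Odd a) (hb : Odd b) {P : R[X]}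
    (hP : P * ((X ^ a - 1) * (X ^ b - 1)) = (X ^ (a * b) - 1) * (X - 1)) :
    P.eval (-1) = 1 := by
  have h := congrArg (eval (-1 : R)) hP
  simp only [eval_mul, eval_sub, eval_pow, eval_X, eval_one, ha.neg_one_pow, hb.neg_one_pow,
    (ha.mul hb).neg_one_pow] at h
  have hne : (-1 - 1 : R) * (-1 - 1) ≠ 0 := by
    have : (-1 - 1 : R) = -2 := by ring
    simp [this, NeZero.ne]
  exact (mul_eq_right₀ hne).mp h

theorem eval_neg_one_eq_of_odd_of_even {a b : ℕ} (hb : 0 < b) (ha : Odd a) (hb' : Even b)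
    {P : R[X]} (hP : P * ((X ^ a - 1) * (X ^ b - 1)) = (X ^ (a * b) - 1) * (X - 1)) :
    P.eval (-1) = a := by
  have h := congrArg (eval (-1 : R)) (mul_X_pow_sub_one_eq_geom_sum_mul hb hP)
  simp only [eval_mul, eval_sub, eval_pow, eval_X, eval_one, eval_finsetSum, ha.neg_one_pow,
    hb'.neg_one_pow, one_pow, Finset.sum_const, Finset.card_range, nsmul_eq_mul, mul_one] at h
  have hne : (-1 - 1 : R) ≠ 0 := by
    rw [show (-1 - 1 : R) = -2 by ring, neg_ne_zero]
    exact NeZero.ne 2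
  exact mul_right_cancel₀ hne h

theorem stmt17_general (a b : ℕ) (hb : 0 < b)
    (P : Polynomial ℤ)
    (hP : P * (((X : Polynomial ℤ) ^ a - 1) * (X ^ b - 1)) =
      (X ^ (a * b) - 1) * (X - 1)) :
    (Odd a → Odd b → P.eval (-1) = 1) ∧
    (Odd a → Even b → P.eval (-1) = (a : ℤ)) :=
  ⟨fun ha hb' => eval_neg_one_eq_one_of_odd_of_odd ha hb' hP,
    fun ha hb' => eval_neg_one_eq_of_odd_of_even hb ha hb' hP⟩

/-- For coprime positive integers `a, b`, let `P ∈ ℤ[X]` satisfy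
`P·(X^a − 1)·(X^b − 1) = (X^{ab} − 1)·(X − 1)` (so `P` is the Alexander polynomial of
the `(a,b)`-torus knot). If `a` and `b` are both odd then `P(−1) = 1`; if `a` is odd
and `b` is even then `P(−1) = a`. -/
theorem stmt17 (a b : ℕ) (ha : 0 < a) (hb : 0 < b) (hab : Nat.Coprime a b)
    (P : Polynomial ℤ)
    (hP : P * (((X : Polynomial ℤ) ^ a - 1) * (X ^ b - 1)) =
      (X ^ (a * b) - 1) * (X - 1)) :
    (Odd a → Odd b → P.eval (-1) = 1) ∧
    (Odd a → Even b → P.eval (-1) = (a : ℤ)) :=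
  stmt17_general a b hb P hP
end
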